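/- arXiv:1301.5268 — 2 statements merged into one kernel-verified Lean document; each statement's English description precedes it below -/
import Mathlib

section
/- Let H = -Δ + V on ℓ²(Z^d) with V bounded and Γ ⊊ Z^d. Then E_Γ(H) > E_∅(H) if and only if E_Γ(H,t) > E_∅(H) for all t > 0. -/
open scoped BigOperators

noncomputable section

/-- `ℤ^d`. -/
abbrev Zd (d : ℕ) := Fin d → ℤ

/-- `ℓ¹` distance on `ℤ^d`. -/
def dist1 {d : ℕ} (x y : Zd d) : ℕ := ∑ i, (x i - y i).natAbs

/-- the `i`-th coordinate unit vector. -/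
def unitVec {d : ℕ} (i : Fin d) : Zd d := fun j => if j = i then 1 else 0

/-- the negative discrete Laplacian: `(-Δφ)(x) = Σ_{‖x-y‖₁=1} (φ(x) - φ(y))`. -/
def negLap {d : ℕ} (φ : Zd d → ℝ) (x : Zd d) : ℝ :=
  ∑ i, ((φ x - φ (x + unitVec i)) + (φ x - φ (x - unitVec i)))

/-- characteristic function of a set. -/
def chi {d : ℕ} (A : Set (Zd d)) : Zd d → ℝ := A.indicator fun _ => 1

/-- edge boundary `∂A = {(x,y) ∈ A × Aᶜ : ‖x-y‖₁ = 1}`. -/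
def bdry {d : ℕ} (A : Set (Zd d)) : Set (Zd d × Zd d) :=
  {p | p.1 ∈ A ∧ p.2 ∉ A ∧ dist1 p.1 p.2 = 1}

/-- squared `ℓ²` norm (for finitely supported functions). -/
def norm2 {d : ℕ} (φ : Zd d → ℝ) : ℝ := ∑ᶠ x, φ x ^ 2

/-- quadratic form `⟨φ, (-Δ + V)φ⟩` (for finitely supported `φ`). -/
def energy {d : ℕ} (V : Zd d → ℝ) (φ : Zd d → ℝ) : ℝ :=
  ∑ᶠ x, φ x * (negLap φ x + V x * φ x)

/-- `V` is a bounded potential. -/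
def BddPot {d : ℕ} (V : Zd d → ℝ) : Prop := ∃ C, ∀ x, |V x| ≤ C

/-- the spread `spr(V) = sup V - inf V` of a bounded potential. -/
def spr {d : ℕ} (V : Zd d → ℝ) : ℝ := sSup (Set.range V) - sInf (Set.range V)

/-- `E_∅(H) = inf σ(-Δ + V)`, characterized variationally over normalized finitely
supported functions. -/
def E0 {d : ℕ} (V : Zd d → ℝ) : ℝ :=
  sInf {r | ∃ φ : Zd d → ℝ, (Function.support φ).Finite ∧ norm2 φ = 1 ∧ r = energy V φ}

/-- `E_Γ(H) = inf σ(H_Γ)`, the ground state energy of the `Γ`-trimmed operator,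
characterized variationally over normalized finitely supported functions vanishing on `Γ`. -/
def EG {d : ℕ} (V : Zd d → ℝ) (Γ : Set (Zd d)) : ℝ :=
  sInf {r | ∃ φ : Zd d → ℝ, (Function.support φ).Finite ∧ (∀ x ∈ Γ, φ x = 0) ∧
    norm2 φ = 1 ∧ r = energy V φ}

/-- `E_Γ(H,t) = inf σ(H + t χ_Γ)`. -/
def EGt {d : ℕ} (V : Zd d → ℝ) (Γ : Set (Zd d)) (t : ℝ) : ℝ :=
  E0 fun x => V x + t * chi Γ x

/-- the open box `Λ⁰_K(ζ) = {y : ‖y-ζ‖_∞ < K/2}`. -/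
def Lam0 {d : ℕ} (K : ℕ) (ζ : Zd d) : Set (Zd d) := {y | ∀ i, 2 * (y i - ζ i).natAbs < K}

/-- `Γ` is `(K,Q)`-relatively dense: `|Γ ∩ Λ⁰_K(ζ)| ≥ Q` for all `ζ ∈ KZ^d`. -/
def RelDense {d : ℕ} (Γ : Set (Zd d)) (K Q : ℕ) : Prop :=
  ∀ z : Zd d, Q ≤ (Γ ∩ Lam0 K fun i => (K : ℤ) * z i).ncard

/-- `K_* = K` if `K` is odd, `K+1` if `K` is even. -/
def Kstar (K : ℕ) : ℕ := if K % 2 = 1 then K else K + 1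

/-- `⟨χ_A, (-Δ)χ_A⟩` for a finite set `A`; for `A ⊆ Γᶜ` this coincides with
`⟨χ_A, (-Δ_Γ)χ_A⟩` for the `Γ`-trimmed Laplacian. -/
def qform {d : ℕ} (A : Finset (Zd d)) : ℝ := ∑ x ∈ A, negLap (chi ↑A) x

/-- Cheeger constant `β(Γ)` of the `Γ`-trimmed Laplacian. -/
def betaG {d : ℕ} (Γ : Set (Zd d)) : ℝ :=
  sInf {r | ∃ A : Finset (Zd d), A.Nonempty ∧ (↑A : Set (Zd d)) ⊆ Γᶜ ∧
    r = qform A / A.card}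

/-- `⟨χ_A, H(t)χ_A⟩ = ⟨χ_A, (-Δ)χ_A⟩ + t|A ∩ Γ|` for a finite set `A`. -/
def qformT {d : ℕ} (Γ : Set (Zd d)) (t : ℝ) (A : Finset (Zd d)) : ℝ :=
  qform A + t * ((↑A ∩ Γ : Set (Zd d)).ncard)

/-- Cheeger constant `β(t)` of `H(t) = -Δ + t χ_Γ`. -/
def betaT {d : ℕ} (Γ : Set (Zd d)) (t : ℝ) : ℝ :=
  sInf {r | ∃ A : Finset (Zd d), A.Nonempty ∧ r = qformT Γ t A / A.card}

/-- the box `Λ_L(x₀) = {y : ‖y-x₀‖_∞ ≤ L/2}`. -/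
def box {d : ℕ} (L : ℕ) (x₀ : Zd d) : Set (Zd d) := {y | ∀ i, 2 * (y i - x₀ i).natAbs ≤ L}

/-- `φ` is an eigenfunction of `H_Λ = (-Δ + V)_Λ` with eigenvalue `E`. -/
def eigOn {d : ℕ} (V : Zd d → ℝ) (Λ : Set (Zd d)) (φ : Zd d → ℝ) (E : ℝ) : Prop :=
  (∀ x ∉ Λ, φ x = 0) ∧ ∀ x ∈ Λ, negLap φ x + V x * φ x = E * φ x

/-- `E^Λ = inf σ(H_Λ)`, variationally. -/
def Ebox {d : ℕ} (V : Zd d → ℝ) (Λ : Set (Zd d)) : ℝ :=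
  sInf {r | ∃ φ : Zd d → ℝ, (∀ x ∉ Λ, φ x = 0) ∧ norm2 φ = 1 ∧ r = energy V φ}

/-!
Split a normalized test function as `φ = ψ + η` with `ψ = χ_{Γᶜ} φ`, `η = χ_Γ φ`, and let
`s = ‖η‖²`. Since `ψ` vanishes on `Γ`, `E_Γ(H) (1 - s) ≤ ⟨ψ, H ψ⟩`, and the inequality
`(a - b)² ≤ (1 + c) a² + (1 + c⁻¹) b²` applied edge by edge to the Dirichlet form gives
`⟨ψ, H ψ⟩ ≤ ⟨φ, H φ⟩ + O(c) + O_c(s)`. So `⟨φ, H(t) φ⟩ = ⟨φ, H φ⟩ + t s` is bounded below both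
by `E_∅(H) + t s` and, for `c` small, by `E_∅(H) + g / 2 - O(s) + t s`, where
`g = E_Γ(H) - E_∅(H)`; a convex combination of the two bounds no longer depends on `s` and
stays strictly above `E_∅(H)` when `g > 0`.
Conversely, test functions vanishing on `Γ` do not feel `t χ_Γ`, so `E_Γ(H, t) ≤ E_Γ(H)`.
-/

open Function

variable {d : ℕ}

def dirichletForm (φ : Zd d → ℝ) : ℝ := ∑ i, ∑ᶠ x, (φ x - φ (x + unitVec i)) ^ 2

def potentialForm (W φ : Zd d → ℝ) : ℝ := ∑ᶠ x, W x * φ x ^ 2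

lemma dirichletForm_nonneg (φ : Zd d → ℝ) : 0 ≤ dirichletForm φ :=
  Finset.sum_nonneg fun _ _ => finsum_nonneg fun _ => sq_nonneg _

lemma norm2_nonneg (φ : Zd d → ℝ) : 0 ≤ norm2 φ :=
  finsum_nonneg fun _ => sq_nonneg _

lemma norm2_eq_potentialForm_one (φ : Zd d → ℝ) : norm2 φ = potentialForm (fun _ => 1) φ := by
  simp [norm2, potentialForm]

lemma finsum_mul_sub_shift {φ : Zd d → ℝ} (hφ : HasFiniteSupport φ) (v : Zd d) :
    ∑ᶠ x, (φ x * (φ x - φ (x + v)) + φ x * (φ x - φ (x - v))) =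
      ∑ᶠ x, (φ x - φ (x + v)) ^ 2 := by
  have hshift : ∑ᶠ x, φ x * (φ x - φ (x - v)) = ∑ᶠ x, φ (x + v) * (φ (x + v) - φ x) := by
    simpa using (finsum_comp_equiv (Equiv.addRight v) (f := fun x => φ x * (φ x - φ (x - v)))).symm
  rw [finsum_add_distrib (by fun_prop) (by fun_prop), hshift,
    ← finsum_add_distrib (by fun_prop) (by fun_prop (disch := simp [add_left_injective]))]
  exact finsum_congr fun x => by ring

lemma finsum_mul_negLap {φ : Zd d → ℝ} (hφ : HasFiniteSupport φ) :
    ∑ᶠ x, φ x * negLap φ x = dirichletForm φ := by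
  simp_rw [negLap, Finset.mul_sum, mul_add]
  rw [finsum_sum_comm _ _ fun i _ => by fun_prop]
  exact Finset.sum_congr rfl fun i _ => finsum_mul_sub_shift hφ (unitVec i)

lemma energy_eq_dirichletForm_add_potentialForm (W : Zd d → ℝ) {φ : Zd d → ℝ}
    (hφ : HasFiniteSupport φ) : energy W φ = dirichletForm φ + potentialForm W φ := by
  rw [energy, ← finsum_mul_negLap hφ, potentialForm,
    ← finsum_add_distrib (by fun_prop) (by fun_prop (disch := simp))]
  exact finsum_congr fun x => by ring

lemma dirichletForm_le {φ : Zd d → ℝ} (hφ : HasFiniteSupport φ) :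
    dirichletForm φ ≤ 4 * d * norm2 φ := by
  have hdir : ∀ i : Fin d, ∑ᶠ x, (φ x - φ (x + unitVec i)) ^ 2 ≤ 4 * norm2 φ := by
    intro i
    have hshift : ∑ᶠ x, φ (x + unitVec i) ^ 2 = norm2 φ :=
      finsum_comp_equiv (Equiv.addRight (unitVec i)) (f := fun x => φ x ^ 2)
    calc ∑ᶠ x, (φ x - φ (x + unitVec i)) ^ 2
        ≤ ∑ᶠ x, (2 * φ x ^ 2 + 2 * φ (x + unitVec i) ^ 2) :=
          finsum_le_finsum' (by fun_prop (disch := simp [add_left_injective]))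
            (by fun_prop (disch := simp [add_left_injective]))
            fun x => by nlinarith [sq_nonneg (φ x + φ (x + unitVec i))]
      _ = 4 * norm2 φ := by
          rw [finsum_add_distrib (by fun_prop (disch := simp))
            (by fun_prop (disch := simp [add_left_injective])),
            ← mul_finsum, ← mul_finsum, hshift, norm2]
          ring
  calc dirichletForm φ ≤ ∑ _i : Fin d, 4 * norm2 φ := Finset.sum_le_sum fun i _ => hdir i
    _ = 4 * d * norm2 φ := by simp; ring

lemma sq_sub_le_one_add_mul_sq {a b c : ℝ} (hc : 0 < c) :
    (a - b) ^ 2 ≤ (1 + c) * a ^ 2 + (1 + c⁻¹) * b ^ 2 := by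
  have hsq : 0 ≤ (c * a + b) ^ 2 / c := by positivity
  have hid : (1 + c) * a ^ 2 + (1 + c⁻¹) * b ^ 2 - (a - b) ^ 2 = (c * a + b) ^ 2 / c := by
    field_simp
    ring
  linarith

lemma dirichletForm_sub_le {φ η : Zd d → ℝ} (hφ : HasFiniteSupport φ) (hη : HasFiniteSupport η)
    {c : ℝ} (hc : 0 < c) :
    dirichletForm (φ - η) ≤ (1 + c) * dirichletForm φ + (1 + c⁻¹) * dirichletForm η := by
  rw [dirichletForm, dirichletForm, dirichletForm, Finset.mul_sum, Finset.mul_sum,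
    ← Finset.sum_add_distrib]
  refine Finset.sum_le_sum fun i _ => ?_
  rw [mul_finsum, mul_finsum,
    ← finsum_add_distrib (by fun_prop (disch := simp [add_left_injective]))
      (by fun_prop (disch := simp [add_left_injective]))]
  simp only [Pi.sub_apply]
  refine finsum_le_finsum' (by fun_prop (disch := simp [add_left_injective]))
    (by fun_prop (disch := simp [add_left_injective])) fun x => ?_
  dsimp only
  rw [sub_sub_sub_comm]
  exact sq_sub_le_one_add_mul_sq hc

lemma Function.HasFiniteSupport.indicator {α M : Type*} [Zero M] {f : α → M}
    (hf : HasFiniteSupport f) (s : Set α) : HasFiniteSupport (s.indicator f) := by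
  rw [HasFiniteSupport, Set.support_indicator]
  exact hf.inter_of_right s

lemma abs_potentialForm_le {W φ : Zd d → ℝ} {C : ℝ} (hC : ∀ x, |W x| ≤ C)
    (hφ : HasFiniteSupport φ) : |potentialForm W φ| ≤ C * norm2 φ := by
  have hlo : ∑ᶠ x, -C * φ x ^ 2 ≤ potentialForm W φ :=
    finsum_le_finsum' (by fun_prop (disch := simp)) (by fun_prop (disch := simp))
      fun x => mul_le_mul_of_nonneg_right (neg_le_of_abs_le (hC x)) (sq_nonneg _)
  have hhi : potentialForm W φ ≤ ∑ᶠ x, C * φ x ^ 2 :=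
    finsum_le_finsum' (by fun_prop (disch := simp)) (by fun_prop (disch := simp))
      fun x => mul_le_mul_of_nonneg_right (le_of_abs_le (hC x)) (sq_nonneg _)
  rw [← mul_finsum] at hlo hhi
  rw [abs_le, norm2]
  constructor <;> linarith

lemma potentialForm_eq_add_indicator_compl (W : Zd d → ℝ) {φ : Zd d → ℝ}
    (hφ : HasFiniteSupport φ) (Γ : Set (Zd d)) :
    potentialForm W φ = potentialForm W (Γ.indicator φ) + potentialForm W (Γᶜ.indicator φ) := by
  have hη : HasFiniteSupport (Γ.indicator φ) := hφ.indicator Γ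
  have hψ : HasFiniteSupport (Γᶜ.indicator φ) := hφ.indicator Γᶜ
  rw [potentialForm, potentialForm, potentialForm,
    ← finsum_add_distrib (by fun_prop (disch := simp)) (by fun_prop (disch := simp))]
  refine finsum_congr fun x => ?_
  by_cases hx : x ∈ Γ <;> simp [hx]

lemma norm2_eq_add_indicator_compl {φ : Zd d → ℝ} (hφ : HasFiniteSupport φ) (Γ : Set (Zd d)) :
    norm2 φ = norm2 (Γ.indicator φ) + norm2 (Γᶜ.indicator φ) := by
  simp only [norm2_eq_potentialForm_one]
  exact potentialForm_eq_add_indicator_compl _ hφ Γ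

lemma energy_add_mul_chi (V : Zd d → ℝ) {φ : Zd d → ℝ} (hφ : HasFiniteSupport φ)
    (Γ : Set (Zd d)) (t : ℝ) :
    energy (fun x => V x + t * chi Γ x) φ = energy V φ + t * norm2 (Γ.indicator φ) := by
  have hη : HasFiniteSupport (Γ.indicator φ) := hφ.indicator Γ
  rw [energy, energy, norm2, mul_finsum,
    ← finsum_add_distrib (by fun_prop) (by fun_prop (disch := simp))]
  refine finsum_congr fun x => ?_
  by_cases hx : x ∈ Γ
  · simp [hx, chi]; ring
  · simp [hx, chi]

lemma energy_indicator_compl_le {V : Zd d → ℝ} {C : ℝ} (hC : ∀ x, |V x| ≤ C) {φ : Zd d → ℝ}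
    (hφ : HasFiniteSupport φ) (Γ : Set (Zd d)) {c : ℝ} (hc : 0 < c) :
    energy V (Γᶜ.indicator φ) ≤
      energy V φ + c * dirichletForm φ + ((1 + c⁻¹) * (4 * d) + C) * norm2 (Γ.indicator φ) := by
  have hη := hφ.indicator Γ
  have hdir : dirichletForm (Γᶜ.indicator φ) ≤
      (1 + c) * dirichletForm φ + (1 + c⁻¹) * (4 * d * norm2 (Γ.indicator φ)) := by
    rw [Set.indicator_compl]
    refine (dirichletForm_sub_le hφ hη hc).trans ?_
    gcongr
    exact dirichletForm_le hη
  have hpot := potentialForm_eq_add_indicator_compl V hφ Γ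
  have hpotη := (abs_le.1 (abs_potentialForm_le hC hη)).1
  rw [energy_eq_dirichletForm_add_potentialForm V (hφ.indicator Γᶜ),
    energy_eq_dirichletForm_add_potentialForm V hφ]
  linarith

lemma neg_mul_norm2_le_energy {W : Zd d → ℝ} {C : ℝ} (hC : ∀ x, |W x| ≤ C) {φ : Zd d → ℝ}
    (hφ : HasFiniteSupport φ) : -C * norm2 φ ≤ energy W φ := by
  rw [energy_eq_dirichletForm_add_potentialForm W hφ]
  linarith [dirichletForm_nonneg φ, (abs_le.1 (abs_potentialForm_le hC hφ)).1]

lemma negLap_const_mul (φ : Zd d → ℝ) (r : ℝ) (x : Zd d) :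
    negLap (fun y => r * φ y) x = r * negLap φ x := by
  simp only [negLap, Finset.mul_sum]
  exact Finset.sum_congr rfl fun i _ => by ring

lemma energy_const_mul (W : Zd d → ℝ) (φ : Zd d → ℝ) (r : ℝ) :
    energy W (fun x => r * φ x) = r ^ 2 * energy W φ := by
  rw [energy, energy, mul_finsum]
  exact finsum_congr fun x => by rw [negLap_const_mul]; ring

lemma norm2_const_mul (φ : Zd d → ℝ) (r : ℝ) : norm2 (fun x => r * φ x) = r ^ 2 * norm2 φ := by
  rw [norm2, norm2, mul_finsum]
  exact finsum_congr fun x => by ring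

lemma EG_mul_norm2_le_energy {V : Zd d → ℝ} (hV : BddPot V) {Γ : Set (Zd d)} {φ : Zd d → ℝ}
    (hφ : HasFiniteSupport φ) (hφΓ : ∀ x ∈ Γ, φ x = 0) : EG V Γ * norm2 φ ≤ energy V φ := by
  obtain ⟨C, hC⟩ := hV
  rcases (norm2_nonneg φ).eq_or_lt with hzero | hpos
  · simpa [← hzero] using neg_mul_norm2_le_energy hC hφ
  set r := (Real.sqrt (norm2 φ))⁻¹
  have hr : r ^ 2 = (norm2 φ)⁻¹ := by rw [inv_pow, Real.sq_sqrt hpos.le]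
  have hbdd : BddBelow {r | ∃ φ : Zd d → ℝ, (support φ).Finite ∧ (∀ x ∈ Γ, φ x = 0) ∧
      norm2 φ = 1 ∧ r = energy V φ} := by
    refine ⟨-C, ?_⟩
    rintro _ ⟨ψ, hψ, -, hn, rfl⟩
    simpa [hn] using neg_mul_norm2_le_energy hC hψ
  have hle : EG V Γ ≤ energy V (fun x => r * φ x) :=
    csInf_le hbdd ⟨_, show HasFiniteSupport _ by fun_prop, fun x hx => by simp [hφΓ x hx],
      by rw [norm2_const_mul, hr, inv_mul_cancel₀ hpos.ne'], rfl⟩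
  rw [energy_const_mul, hr] at hle
  rwa [le_inv_mul_iff₀ hpos, mul_comm] at hle

lemma EG_empty (V : Zd d → ℝ) : EG V ∅ = E0 V := by
  simp [EG, E0]

lemma E0_le_energy {V : Zd d → ℝ} (hV : BddPot V) {φ : Zd d → ℝ} (hφ : HasFiniteSupport φ)
    (hn : norm2 φ = 1) : E0 V ≤ energy V φ := by
  simpa [EG_empty, hn] using EG_mul_norm2_le_energy (Γ := ∅) hV hφ (by simp)

lemma EG_mul_one_sub_le {V : Zd d → ℝ} {C : ℝ} (hC : ∀ x, |V x| ≤ C) {φ : Zd d → ℝ}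
    (hφ : HasFiniteSupport φ) (hn : norm2 φ = 1) (Γ : Set (Zd d)) {c : ℝ} (hc : 0 < c) :
    EG V Γ * (1 - norm2 (Γ.indicator φ)) ≤
      energy V φ + 4 * d * c + ((1 + c⁻¹) * (4 * d) + C) * norm2 (Γ.indicator φ) := by
  have hψn : norm2 (Γᶜ.indicator φ) = 1 - norm2 (Γ.indicator φ) := by
    linarith [norm2_eq_add_indicator_compl hφ Γ]
  have hdir : c * dirichletForm φ ≤ 4 * d * c := by
    have := mul_le_mul_of_nonneg_left (dirichletForm_le hφ) hc.le
    rw [hn] at this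
    linarith
  calc EG V Γ * (1 - norm2 (Γ.indicator φ)) ≤ energy V (Γᶜ.indicator φ) := by
        rw [← hψn]
        exact EG_mul_norm2_le_energy ⟨C, hC⟩ (hφ.indicator Γᶜ)
          fun x hx => Set.indicator_of_notMem (not_not.2 hx) φ
    _ ≤ _ := energy_indicator_compl_le hC hφ Γ hc
    _ ≤ _ := by linarith

lemma BddPot.add_mul_chi {V : Zd d → ℝ} (hV : BddPot V) (Γ : Set (Zd d)) (t : ℝ) :
    BddPot fun x => V x + t * chi Γ x := by
  obtain ⟨C, hC⟩ := hV
  refine ⟨C + |t|, fun x => ?_⟩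
  have hchi : |chi Γ x| ≤ 1 := by by_cases hx : x ∈ Γ <;> simp [chi, hx]
  calc |V x + t * chi Γ x| ≤ |V x| + |t| * |chi Γ x| := by rw [← abs_mul]; exact abs_add_le _ _
    _ ≤ C + |t| := by gcongr; exacts [hC x, mul_le_of_le_one_right (abs_nonneg t) hchi]

lemma norm2_single (x₀ : Zd d) : norm2 (Pi.single x₀ (1 : ℝ)) = 1 := by
  rw [norm2, finsum_eq_single _ x₀ fun x hx => by simp [hx]]
  simp

lemma hasFiniteSupport_single (x₀ : Zd d) : HasFiniteSupport (Pi.single x₀ (1 : ℝ)) :=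
  (Set.finite_singleton x₀).subset Pi.support_single_subset

lemma EGt_le_EG {V : Zd d → ℝ} (hV : BddPot V) {Γ : Set (Zd d)} (hΓ : Γ ≠ Set.univ) (t : ℝ) :
    EGt V Γ t ≤ EG V Γ := by
  obtain ⟨x₀, hx₀⟩ := (Set.ne_univ_iff_exists_notMem Γ).1 hΓ
  refine le_csInf ⟨_, Pi.single x₀ 1, hasFiniteSupport_single x₀,
    fun x hx => Pi.single_eq_of_ne (ne_of_mem_of_not_mem hx hx₀) 1, norm2_single x₀, rfl⟩ ?_
  rintro _ ⟨φ, hφ, hφΓ, hn, rfl⟩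
  have hη : Γ.indicator φ = 0 := funext fun x => Set.indicator_apply_eq_zero.2 (hφΓ x)
  calc EGt V Γ t ≤ energy (fun x => V x + t * chi Γ x) φ :=
        E0_le_energy (hV.add_mul_chi Γ t) hφ hn
    _ = energy V φ := by simp [energy_add_mul_chi V hφ, hη, norm2]

lemma E0_lt_EGt_of_E0_lt_EG {V : Zd d → ℝ} (hV : BddPot V) {Γ : Set (Zd d)}
    (hgap : E0 V < EG V Γ) {t : ℝ} (ht : 0 < t) : E0 V < EGt V Γ t := by
  obtain ⟨C, hC⟩ := id hV
  have hC₀ : 0 ≤ C := (abs_nonneg _).trans (hC 0)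
  set g := EG V Γ - E0 V
  have hg : 0 < g := sub_pos.2 hgap
  set c := g / (8 * (d + 1))
  have hc : 0 < c := by positivity
  have hdc : 4 * d * c ≤ g / 2 := by
    calc 4 * d * c = g / 2 * (d / (d + 1)) := by simp only [c]; field_simp; ring
      _ ≤ g / 2 :=
        mul_le_of_le_one_right (by positivity) (div_le_one_of_le₀ (by linarith) (by positivity))
  set L := (1 + c⁻¹) * (4 * d) + C + |EG V Γ|
  have hL : 0 ≤ L := by positivity
  refine (lt_add_of_pos_right _ (by positivity : 0 < t * g / (2 * (t + L)))).trans_le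
    (le_csInf ⟨_, Pi.single 0 1, hasFiniteSupport_single 0, norm2_single 0, rfl⟩ ?_)
  rintro _ ⟨φ, hφ, hn, rfl⟩
  set s := norm2 (Γ.indicator φ)
  have hs : 0 ≤ s := norm2_nonneg _
  have hE0 : E0 V ≤ energy V φ := E0_le_energy hV hφ hn
  have hEG := EG_mul_one_sub_le hC hφ hn Γ hc
  have habs : EG V Γ * s ≤ |EG V Γ| * s := mul_le_mul_of_nonneg_right (le_abs_self _) hs
  rw [energy_add_mul_chi V hφ]
  -- `L` times `E0 V ≤ energy V φ` plus `t` times `E0 V + g / 2 - L * s ≤ energy V φ`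
  have hkey : t * g ≤ (energy V φ + t * s - E0 V) * (2 * (t + L)) := by
    nlinarith [mul_nonneg hL (sub_nonneg.2 hE0), mul_nonneg (mul_nonneg ht.le ht.le) hs]
  rw [← le_sub_iff_add_le', div_le_iff₀ (by positivity)]
  exact hkey

theorem stmt9_general (d : ℕ) (V : Zd d → ℝ) (hV : BddPot V)
    (Γ : Set (Zd d)) (hne : Γ ≠ Set.univ) :
    E0 V < EG V Γ ↔ ∀ t : ℝ, 0 < t → E0 V < EGt V Γ t :=
  ⟨fun hgap _ ht => E0_lt_EGt_of_E0_lt_EG hV hgap ht,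
    fun h => (h 1 one_pos).trans_le (EGt_le_EG hV hne 1)⟩

/-- `E_Γ(H) > E_∅(H)` iff `E_Γ(H,t) > E_∅(H)` for all `t > 0`. -/
theorem stmt9 (d : ℕ) (hd : 0 < d) (V : Zd d → ℝ) (hV : BddPot V)
    (Γ : Set (Zd d)) (hne : Γ ≠ Set.univ) :
    E0 V < EG V Γ ↔ ∀ t : ℝ, 0 < t → E0 V < EGt V Γ t :=
  stmt9_general d V hV Γ hne
end
end

section
/- Let ψ_g be the strictly positive normalized ground state of H_Λ = (-Δ + V)_Λ on a box Λ = Λ_L(x₀) ⊂ Z^d. Then ψ_g(x) ≥ Y^{-dL} for all x ∈ Λ, where Y = 2d + 1 + spr(V). -/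
open scoped BigOperators

noncomputable section

/-!
Write `N ψ x = ∑ᵢ (ψ(x + eᵢ) + ψ(x - eᵢ))`. Evaluating the eigenvalue equation at a maximum
of `ψ` gives `E ≥ inf V`, so the eigenvalue equation `N ψ = (2d + V - E) ψ` yields
`ψ x + N ψ x ≤ Y ψ x` on `Λ`.
Every point of `Λ` at `ℓ¹`-distance `k + 1` from `x` is a neighbour of a point of `Λ` at
distance `k`, hence the mass of `ψ` in the `ℓ¹`-ball of radius `k` around `x` (intersected with
`Λ`) is at most `Yᵏ ψ x`. The ball of radius `dL` covers `Λ`, and `∑ ψ ≥ ‖ψ‖₂ = 1`.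
-/

def nbrSum {d : ℕ} (φ : Zd d → ℝ) (x : Zd d) : ℝ :=
  ∑ i, (φ (x + unitVec i) + φ (x - unitVec i))

lemma negLap_eq_sub_nbrSum {d : ℕ} (φ : Zd d → ℝ) (x : Zd d) :
    negLap φ x = 2 * d * φ x - nbrSum φ x := by
  simp only [negLap, nbrSum, Finset.sum_add_distrib, Finset.sum_sub_distrib, Finset.sum_const,
    Finset.card_univ, Fintype.card_fin, nsmul_eq_mul]
  ring

lemma sub_le_spr {d : ℕ} {V : Zd d → ℝ} (hV : BddPot V) (x y : Zd d) : V x - V y ≤ spr V := by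
  obtain ⟨C, hC⟩ := hV
  have hbddAbove : BddAbove (Set.range V) := ⟨C, by rintro _ ⟨z, rfl⟩; exact (abs_le.mp (hC z)).2⟩
  have hbddBelow : BddBelow (Set.range V) := ⟨-C, by rintro _ ⟨z, rfl⟩; exact (abs_le.mp (hC z)).1⟩
  exact sub_le_sub (le_csSup hbddAbove ⟨x, rfl⟩) (csInf_le hbddBelow ⟨y, rfl⟩)

lemma one_le_sum_of_sum_sq_eq_one {ι : Type*} {s : Finset ι} {f : ι → ℝ}
    (hf : ∀ i ∈ s, 0 ≤ f i) (h : ∑ i ∈ s, f i ^ 2 = 1) : 1 ≤ ∑ i ∈ s, f i := by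
  rw [← h]
  refine Finset.sum_le_sum fun i hi => ?_
  have : f i ^ 2 ≤ 1 := h ▸ Finset.single_le_sum (fun j _ => sq_nonneg (f j)) hi
  nlinarith [hf i hi]

lemma norm2_eq_sum {d : ℕ} {φ : Zd d → ℝ} {s : Finset (Zd d)} (hφ : ∀ x ∉ s, φ x = 0) :
    norm2 φ = ∑ x ∈ s, φ x ^ 2 :=
  finsum_eq_sum_of_support_subset _ fun x hx => by
    by_contra hxs
    simp [hφ x hxs] at hx

section Box

variable {d L : ℕ} {x₀ : Zd d}

lemma box_finite (L : ℕ) (x₀ : Zd d) : (box L x₀).Finite := by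
  refine (Set.Finite.pi fun i => Set.finite_Icc (x₀ i - L) (x₀ i + L)).subset fun y hy => ?_
  simp only [Set.mem_pi, Set.mem_univ, Set.mem_Icc, forall_true_left]
  intro i
  have := hy i
  omega

def boxFinset (L : ℕ) (x₀ : Zd d) : Finset (Zd d) := (box_finite L x₀).toFinset

@[simp]
lemma mem_boxFinset {y : Zd d} : y ∈ boxFinset L x₀ ↔ y ∈ box L x₀ := Set.Finite.mem_toFinset _

lemma dist1_le_of_mem_box {x y : Zd d} (hx : x ∈ box L x₀) (hy : y ∈ box L x₀) :
    dist1 x y ≤ d * L := by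
  calc dist1 x y ≤ ∑ _i : Fin d, L := Finset.sum_le_sum fun i _ => by
          have := hx i; have := hy i; omega
    _ = d * L := by simp

lemma dist1_eq_zero_iff {x y : Zd d} : dist1 x y = 0 ↔ x = y := by
  simp [dist1, Finset.sum_eq_zero_iff, sub_eq_zero, funext_iff]

lemma dist1_add_one_of_eq_off {x y z : Zd d} (i : Fin d) (hoff : ∀ j ≠ i, y j = z j)
    (hi : (x i - y i).natAbs + 1 = (x i - z i).natAbs) : dist1 x y + 1 = dist1 x z := by
  rw [dist1, dist1, ← Finset.add_sum_erase _ _ (Finset.mem_univ i),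
    ← Finset.add_sum_erase _ _ (Finset.mem_univ i),
    Finset.sum_congr rfl fun j hj => by rw [hoff j (Finset.ne_of_mem_erase hj)]]
  omega

lemma exists_mem_box_neighbour_closer {x z : Zd d} (hx : x ∈ box L x₀) (hz : z ∈ box L x₀)
    (hxz : x ≠ z) : ∃ y ∈ box L x₀, ∃ i, dist1 x y + 1 = dist1 x z ∧
      (z = y + unitVec i ∨ z = y - unitVec i) := by
  obtain ⟨i, hi⟩ := Function.ne_iff.mp hxz
  have hoff (c : ℤ) : ∀ j ≠ i, (z + c • unitVec i) j = z j := fun j hj => by simp [unitVec, hj]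
  have hat (c : ℤ) : (z + c • unitVec i) i = z i + c := by simp [unitVec]
  have hmem (c : ℤ) (hc : 2 * (z i + c - x₀ i).natAbs ≤ L) : z + c • unitVec i ∈ box L x₀ := by
    intro j
    by_cases hj : j = i
    · subst hj; rw [hat]; exact hc
    · rw [hoff c j hj]; exact hz j
  rcases lt_or_gt_of_ne hi with hlt | hgt
  · refine ⟨z + (-1 : ℤ) • unitVec i, hmem _ ?_, i, dist1_add_one_of_eq_off i (hoff _) ?_, ?_⟩
    · have := hx i; have := hz i; omega
    · rw [hat]; omega
    · left; ext j; simp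
  · refine ⟨z + (1 : ℤ) • unitVec i, hmem _ ?_, i, dist1_add_one_of_eq_off i (hoff _) ?_, ?_⟩
    · have := hx i; have := hz i; omega
    · rw [hat]; omega
    · right; ext j; simp

end Box

section Ball

variable {d L : ℕ} {x₀ x : Zd d} {ψ : Zd d → ℝ}

lemma sum_sphere_le_sum_nbrSum (hψ : ∀ y, 0 ≤ ψ y) (hx : x ∈ box L x₀) (k : ℕ) :
    ∑ z ∈ boxFinset L x₀ with dist1 x z = k + 1, ψ z ≤
      ∑ y ∈ boxFinset L x₀ with dist1 x y ≤ k, nbrSum ψ y := by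
  set step : Zd d × Fin d × Bool → Zd d := fun p =>
    if p.2.2 then p.1 + unitVec p.2.1 else p.1 - unitVec p.2.1
  have hcover : {z ∈ boxFinset L x₀ | dist1 x z = k + 1} ⊆
      ({y ∈ boxFinset L x₀ | dist1 x y ≤ k} ×ˢ Finset.univ ×ˢ Finset.univ).image step := by
    intro z hz
    simp only [Finset.mem_filter, mem_boxFinset] at hz
    have hxz : x ≠ z := by rintro rfl; simp [dist1] at hz
    obtain ⟨y, hy, i, hdist, hzy⟩ := exists_mem_box_neighbour_closer hx hz.1 hxz
    simp only [Finset.mem_image, Finset.mem_product, Finset.mem_filter, mem_boxFinset,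
      Finset.mem_univ, and_true, Prod.exists]
    rcases hzy with rfl | rfl
    · exact ⟨y, i, true, ⟨hy, by omega⟩, rfl⟩
    · exact ⟨y, i, false, ⟨hy, by omega⟩, rfl⟩
  calc ∑ z ∈ boxFinset L x₀ with dist1 x z = k + 1, ψ z
      ≤ ∑ z ∈ ({y ∈ boxFinset L x₀ | dist1 x y ≤ k} ×ˢ Finset.univ ×ˢ Finset.univ).image step,
          ψ z := Finset.sum_le_sum_of_subset_of_nonneg hcover fun _ _ _ => hψ _
    _ ≤ ∑ p ∈ {y ∈ boxFinset L x₀ | dist1 x y ≤ k} ×ˢ Finset.univ ×ˢ Finset.univ, ψ (step p) :=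
          Finset.sum_image_le_of_nonneg fun _ _ => hψ _
    _ = ∑ y ∈ boxFinset L x₀ with dist1 x y ≤ k, nbrSum ψ y := by
          simp [Finset.sum_product, nbrSum, step]

lemma sum_ball_le_pow_mul {Y : ℝ} (hψ : ∀ y, 0 ≤ ψ y) (hY : 0 ≤ Y)
    (hsub : ∀ y ∈ box L x₀, ψ y + nbrSum ψ y ≤ Y * ψ y) (hx : x ∈ box L x₀) (k : ℕ) :
    ∑ y ∈ boxFinset L x₀ with dist1 x y ≤ k, ψ y ≤ Y ^ k * ψ x := by
  induction k with
  | zero =>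
    have hcenter : {y ∈ boxFinset L x₀ | dist1 x y ≤ 0} = {x} := by
      ext y
      simp only [Finset.mem_filter, mem_boxFinset, Nat.le_zero, dist1_eq_zero_iff,
        Finset.mem_singleton]
      exact ⟨fun h => h.2.symm, by rintro rfl; exact ⟨hx, rfl⟩⟩
    rw [hcenter, Finset.sum_singleton, pow_zero, one_mul]
  | succ k ih =>
    have hsplit : {y ∈ boxFinset L x₀ | dist1 x y ≤ k + 1} =
        {y ∈ boxFinset L x₀ | dist1 x y ≤ k} ∪ {y ∈ boxFinset L x₀ | dist1 x y = k + 1} := by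
      simp only [Nat.le_add_one_iff, Finset.filter_or]
    rw [hsplit, Finset.sum_union (Finset.disjoint_filter.mpr fun _ _ h h' => by omega)]
    calc _ ≤ ∑ y ∈ boxFinset L x₀ with dist1 x y ≤ k, (ψ y + nbrSum ψ y) := by
          rw [Finset.sum_add_distrib]
          exact add_le_add_right (sum_sphere_le_sum_nbrSum hψ hx k) _
      _ ≤ ∑ y ∈ boxFinset L x₀ with dist1 x y ≤ k, Y * ψ y :=
          Finset.sum_le_sum fun y hy => hsub y (mem_boxFinset.mp (Finset.mem_filter.mp hy).1)
      _ = Y * ∑ y ∈ boxFinset L x₀ with dist1 x y ≤ k, ψ y := (Finset.mul_sum _ _ _).symm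
      _ ≤ Y ^ (k + 1) * ψ x := by
          rw [pow_succ, mul_comm _ Y, mul_assoc]
          exact mul_le_mul_of_nonneg_left ih hY

end Ball

section Eigenfunction

variable {d : ℕ} {V : Zd d → ℝ} {Λ : Set (Zd d)} {ψ : Zd d → ℝ} {E : ℝ}

lemma exists_le_eigenvalue_of_pos (hΛ : Λ.Finite) (hne : Λ.Nonempty) (heig : eigOn V Λ ψ E)
    (hpos : ∀ x ∈ Λ, 0 < ψ x) : ∃ b ∈ Λ, V b ≤ E := by
  obtain ⟨b, hb, hmax⟩ := Set.exists_max_image Λ ψ hΛ hne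
  have hmax' (y : Zd d) : ψ y ≤ ψ b := by
    by_cases hy : y ∈ Λ
    · exact hmax y hy
    · rw [heig.1 y hy]; exact (hpos b hb).le
  have hlap : 0 ≤ negLap ψ b :=
    Finset.sum_nonneg fun i _ => by linarith [hmax' (b + unitVec i), hmax' (b - unitVec i)]
  refine ⟨b, hb, le_of_mul_le_mul_right ?_ (hpos b hb)⟩
  linarith [heig.2 b hb]

lemma add_nbrSum_le_of_eigOn (heig : eigOn V Λ ψ E) {x : Zd d} (hx : x ∈ Λ) (hψx : 0 ≤ ψ x)
    {s : ℝ} (hs : V x - E ≤ s) : ψ x + nbrSum ψ x ≤ (2 * d + 1 + s) * ψ x := by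
  have heq := heig.2 x hx
  rw [negLap_eq_sub_nbrSum] at heq
  nlinarith [mul_le_mul_of_nonneg_right hs hψx]

end Eigenfunction

theorem stmt12_general (d L : ℕ) (x₀ : Zd d)
    (V : Zd d → ℝ) (hV : BddPot V) (ψ : Zd d → ℝ)
    (hnorm : norm2 ψ = 1) (hpos : ∀ x ∈ box L x₀, 0 < ψ x)
    (heig : eigOn V (box L x₀) ψ (Ebox V (box L x₀))) :
    ∀ x ∈ box L x₀, (2 * (d : ℝ) + 1 + spr V) ^ (-((d * L : ℕ) : ℤ)) ≤ ψ x := by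
  intro x hx
  have hψ (y : Zd d) : 0 ≤ ψ y := by
    by_cases hy : y ∈ box L x₀
    · exact (hpos y hy).le
    · exact (heig.1 y hy).ge
  obtain ⟨b, -, hVb⟩ := exists_le_eigenvalue_of_pos (box_finite L x₀) ⟨x, hx⟩ heig hpos
  have hY : 1 ≤ 2 * (d : ℝ) + 1 + spr V := by linarith [sub_le_spr hV b b, d.cast_nonneg (α := ℝ)]
  have hball := sum_ball_le_pow_mul hψ (by linarith) (fun y hy => add_nbrSum_le_of_eigOn heig hy
    (hψ y) (by linarith [sub_le_spr hV y b])) hx (d * L)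
  rw [Finset.filter_true_of_mem fun y hy => dist1_le_of_mem_box hx (mem_boxFinset.mp hy)] at hball
  have hmass : 1 ≤ ∑ y ∈ boxFinset L x₀, ψ y :=
    one_le_sum_of_sum_sq_eq_one (fun y _ => hψ y) <| by
      rw [← norm2_eq_sum fun y hy => heig.1 y (mt mem_boxFinset.mpr hy), hnorm]
  rw [zpow_neg, zpow_natCast, inv_le_iff_one_le_mul₀' (by positivity)]
  exact hmass.trans hball

/-- the positive normalized ground state of `H_Λ` on `Λ = Λ_L(x₀)`
satisfies the uniform lower bound `ψ_g(x) ≥ Y^{-dL}`, `Y = 2d + 1 + spr(V)`. -/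
theorem stmt12 (d L : ℕ) (hd : 0 < d) (hL : 0 < L) (x₀ : Zd d)
    (V : Zd d → ℝ) (hV : BddPot V) (ψ : Zd d → ℝ)
    (hnorm : norm2 ψ = 1) (hpos : ∀ x ∈ box L x₀, 0 < ψ x)
    (heig : eigOn V (box L x₀) ψ (Ebox V (box L x₀))) :
    ∀ x ∈ box L x₀, (2 * (d : ℝ) + 1 + spr V) ^ (-((d * L : ℕ) : ℤ)) ≤ ψ x :=
  stmt12_general d L x₀ V hV ψ hnorm hpos heig
end
end
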